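/- arXiv:2406.05014 — 5 statements merged into one kernel-verified Lean document; each statement's English description precedes it below -/
import Mathlib

section
/- Let U_1, …, U_m (m ≥ 1) be independent Exp(1) random variables and S_sum := U_1 + ⋯ + U_m. Then the recalibrated joint score S := S_sum - log(Σ_{l=0}^{m-1} S_sum^l / l!) has the Exp(1) distribution, i.e. P(S ≥ s) = e^{-s} for all s ≥ 0. (Paper's Lemma 3.8: the joint score obtained from the sum of independent conditional IT anomaly scores, corrected by the term -log Σ_{l=0}^{m-1} S_sum^l/l!, is again a valid IT anomaly score.) -/
open MeasureTheory ProbabilityTheory Real Finset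

open scoped ENNReal

namespace Recal

noncomputable def T (n : ℕ) (x : ℝ) : ℝ := ∑ l ∈ Finset.range (n+1), x ^ l / l.factorial

lemma T_zero (n : ℕ) : T n 0 = 1 := by
  simp [T, Finset.sum_range_succ']

lemma one_le_T {n : ℕ} {x : ℝ} (hx : 0 ≤ x) : 1 ≤ T n x := by
  have h0 : (0:ℝ)^0 / (Nat.factorial 0 : ℝ) = 1 := by norm_num
  calc (1:ℝ) = x ^ 0 / (Nat.factorial 0 : ℝ) := by norm_num
  _ ≤ ∑ l ∈ Finset.range (n+1), x ^ l / l.factorial := by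
      refine Finset.single_le_sum (f := fun l => x ^ l / (l.factorial : ℝ)) ?_ (Finset.mem_range.2 (Nat.succ_pos n))
      intro i _
      positivity

lemma T_pos {n : ℕ} {x : ℝ} (hx : 0 ≤ x) : 0 < T n x := lt_of_lt_of_le one_pos (one_le_T hx)

lemma T_le_exp {n : ℕ} {x : ℝ} (hx : 0 ≤ x) : T n x ≤ Real.exp x :=
  Real.sum_le_exp_of_nonneg hx (n+1)

lemma hasDerivAt_T (n : ℕ) (x : ℝ) :
    HasDerivAt (T n) (∑ l ∈ Finset.range n, x ^ l / l.factorial) x := by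
  have h : HasDerivAt (T n)
      (∑ l ∈ Finset.range (n+1), ((l : ℝ) * x ^ (l - 1) / l.factorial)) x := by
    refine HasDerivAt.fun_sum fun l _ => ?_
    exact (hasDerivAt_pow l x).div_const _
  convert h using 1
  rw [Finset.sum_range_succ']
  simp only [Nat.factorial_succ, Nat.cast_mul, Nat.add_sub_cancel, Nat.cast_add, Nat.cast_one]
  rw [eq_comm]
  have : ∀ l ∈ Finset.range n, ((l:ℝ)+1) * x ^ l / (((l:ℝ)+1) * l.factorial) = x ^ l / l.factorial := by
    intro l _
    rw [mul_div_mul_left _ _ (by positivity : ((l:ℝ)+1) ≠ 0)]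
  rw [Finset.sum_congr rfl this]
  simp

lemma hasDerivAt_G (n : ℕ) (x : ℝ) :
    HasDerivAt (fun x => -(Real.exp (-x) * T n x)) (x ^ n * Real.exp (-x) / n.factorial) x := by
  have he : HasDerivAt (fun x : ℝ => Real.exp (-x)) (-Real.exp (-x)) x := by
    simpa using (hasDerivAt_neg x).exp
  have h := ((he.mul (hasDerivAt_T n x)).neg)
  convert h using 1
  case e'_4 | e'_5 | e'_8 => rfl
  have : T n x - ∑ l ∈ Finset.range n, x ^ l / l.factorial = x ^ n / n.factorial := by
    rw [T, Finset.sum_range_succ]; ring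
  have h2 : -(-Real.exp (-x) * T n x + Real.exp (-x) * ∑ l ∈ Finset.range n, x ^ l / l.factorial)
      = Real.exp (-x) * (T n x - ∑ l ∈ Finset.range n, x ^ l / l.factorial) := by ring
  rw [h2, this]; ring

noncomputable def p (n : ℕ) (x : ℝ) : ℝ := x ^ n * Real.exp (-x) / n.factorial

lemma continuous_p (n : ℕ) : Continuous (p n) := by
  unfold p; fun_prop

lemma p_nonneg {n : ℕ} {x : ℝ} (hx : 0 ≤ x) : 0 ≤ p n x := by
  unfold p; positivity

noncomputable def gpdf (n : ℕ) (x : ℝ) : ℝ≥0∞ :=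
  ENNReal.ofReal (if 0 ≤ x then p n x else 0)

lemma measurable_gpdf (n : ℕ) : Measurable (gpdf n) := by
  apply ENNReal.measurable_ofReal.comp
  exact Measurable.ite measurableSet_Ici (continuous_p n).measurable measurable_const

noncomputable def gmeas (n : ℕ) : Measure ℝ := volume.withDensity (gpdf n)

lemma gpdf_eq_gammaPDF (n : ℕ) : gpdf n = gammaPDF (n+1) 1 := by
  funext x
  rw [gpdf, gammaPDF_eq]
  congr 1
  split_ifs with h
  · rw [p]
    have h1 : ((n:ℝ)+1) - 1 = (n:ℝ) := by ring
    rw [h1, Real.rpow_natCast, Real.one_rpow, Real.Gamma_nat_eq_factorial]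
    ring_nf
  · rfl

instance gmeas_prob (n : ℕ) : IsProbabilityMeasure (gmeas n) := by
  rw [gmeas, gpdf_eq_gammaPDF]
  exact isProbabilityMeasure_gammaMeasure (by positivity) one_pos

lemma gmeas_apply {n : ℕ} {s : Set ℝ} (hs : MeasurableSet s) :
    gmeas n s = ∫⁻ x in s, gpdf n x := withDensity_apply _ hs

lemma lintegral_gpdf_Iio_zero (n : ℕ) {t : ℝ} (ht : t ≤ 0) :
    ∫⁻ x in Set.Iio t, gpdf n x = 0 := by
  rw [setLIntegral_congr_fun (g := fun _ => 0) measurableSet_Iio ?_, lintegral_zero]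
  intro x hx
  rw [gpdf, if_neg (by simp only [Set.mem_Iio] at hx; linarith)]
  simp

lemma integral_p_Icc {n : ℕ} {t : ℝ} (ht : 0 ≤ t) :
    ∫ x in Set.Icc 0 t, p n x = 1 - Real.exp (-t) * T n t := by
  rw [MeasureTheory.integral_Icc_eq_integral_Ioc, ← intervalIntegral.integral_of_le ht]
  have := intervalIntegral.integral_eq_sub_of_hasDerivAt (fun x _ => hasDerivAt_G n x)
    ((continuous_p n).intervalIntegrable 0 t)
  simp only [p] at this ⊢
  rw [this]
  simp [T_zero]
  ring

lemma gmeas_Iic {n : ℕ} {t : ℝ} (ht : 0 ≤ t) :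
    gmeas n (Set.Iic t) = ENNReal.ofReal (1 - Real.exp (-t) * T n t) := by
  rw [gmeas_apply measurableSet_Iic, lintegral_Iic_eq_lintegral_Iio_add_Icc _ ht,
    lintegral_gpdf_Iio_zero n le_rfl, zero_add]
  have h1 : ∫⁻ x in Set.Icc 0 t, gpdf n x = ∫⁻ x in Set.Icc 0 t, ENNReal.ofReal (p n x) := by
    refine setLIntegral_congr_fun measurableSet_Icc ?_
    intro x hx
    rw [gpdf, if_pos hx.1]
  rw [h1, ← MeasureTheory.ofReal_integral_eq_lintegral_ofReal
    ((continuous_p n).integrableOn_Icc)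
    ((ae_restrict_iff' measurableSet_Icc).2 (ae_of_all _ fun x hx => p_nonneg hx.1)),
    integral_p_Icc ht]

lemma exp_mul_T_le_one {n : ℕ} {t : ℝ} (ht : 0 ≤ t) : Real.exp (-t) * T n t ≤ 1 := by
  have := T_le_exp (n := n) ht
  calc Real.exp (-t) * T n t ≤ Real.exp (-t) * Real.exp t := by
        exact mul_le_mul_of_nonneg_left this (Real.exp_nonneg _)
  _ = 1 := by rw [← Real.exp_add]; simp

lemma gmeas_Ici {n : ℕ} {t : ℝ} (ht : 0 ≤ t) :
    gmeas n (Set.Ici t) = ENNReal.ofReal (Real.exp (-t) * T n t) := by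
  have hIio : gmeas n (Set.Iio t) = ENNReal.ofReal (1 - Real.exp (-t) * T n t) := by
    have hsing : gmeas n {t} = 0 := by
      refine (withDensity_absolutelyContinuous volume (gpdf n)) ?_
      simp
    have : gmeas n (Set.Iic t) = gmeas n (Set.Iio t) + gmeas n {t} := by
      rw [← measure_union (by simp [Set.disjoint_singleton_right]) (measurableSet_singleton t)]
      congr 1
      exact Set.Iio_union_right.symm
    rw [gmeas_Iic ht] at this
    rw [hsing, add_zero] at this
    exact this.symm
  have := measure_compl (μ := gmeas n) (s := Set.Iio t) measurableSet_Iio (measure_ne_top _ _)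
  rw [Set.compl_Iio] at this
  rw [this, measure_univ, hIio, ← ENNReal.ofReal_one,
    ← ENNReal.ofReal_sub _ (by nlinarith [exp_mul_T_le_one (n := n) ht, T_pos (n := n) ht, Real.exp_pos (-t)])]
  congr 1
  ring

lemma gmeas_Iio_zero (n : ℕ) : gmeas n (Set.Iio 0) = 0 := by
  rw [gmeas_apply measurableSet_Iio, lintegral_gpdf_Iio_zero n le_rfl]

lemma gmeas_Iic_neg (n : ℕ) {t : ℝ} (ht : t < 0) : gmeas n (Set.Iic t) = 0 :=
  measure_mono_null (fun x hx => lt_of_le_of_lt hx ht) (gmeas_Iio_zero n)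

lemma T_zero_eq (s : ℝ) : T 0 s = 1 := by simp [T]

lemma gmeas0_Iic (s : ℝ) : gmeas 0 (Set.Iic s) = ENNReal.ofReal (1 - Real.exp (-s)) := by
  rcases le_or_gt 0 s with hs | hs
  · rw [gmeas_Iic hs, T_zero_eq, mul_one]
  · rw [gmeas_Iic_neg 0 hs, eq_comm, ENNReal.ofReal_eq_zero]
    have : 1 ≤ Real.exp (-s) := Real.one_le_exp (by linarith)
    linarith

lemma sum_range_T (n : ℕ) (x : ℝ) : T (n+1) x = T n x + x ^ (n+1) / (n+1).factorial := by
  rw [T, T, Finset.sum_range_succ]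

lemma hasDerivAt_G2 (n : ℕ) (t x : ℝ) :
    HasDerivAt (fun x => -(Real.exp (-x) * T n x) - Real.exp (-t) * (x ^ (n+1) / (n+1).factorial))
      (p n x * (1 - Real.exp (x - t))) x := by
  have h1 := hasDerivAt_G n x
  have h2 : HasDerivAt (fun x : ℝ => Real.exp (-t) * (x ^ (n+1) / (n+1).factorial))
      (Real.exp (-t) * (((n:ℝ)+1) * x ^ n / (n+1).factorial)) x := by
    have := ((hasDerivAt_pow (n+1) x).div_const ((n+1).factorial : ℝ)).const_mul (Real.exp (-t))
    simpa using this
  have h := h1.sub h2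
  convert h using 1
  case e'_4 | e'_5 | e'_8 => rfl
  have hfac : ((n+1).factorial : ℝ) = ((n:ℝ)+1) * n.factorial := by
    rw [Nat.factorial_succ]; push_cast; ring
  have hexp : Real.exp (-x) * Real.exp (x - t) = Real.exp (-t) := by
    rw [← Real.exp_add]; ring_nf
  rw [p, hfac]
  have hne1 : ((n:ℝ)+1) ≠ 0 := by positivity
  have hne2 : ((n.factorial:ℝ)) ≠ 0 := by positivity
  field_simp
  linear_combination (-(x ^ n)) * hexp

lemma conv_step (n : ℕ) :
    ((gmeas n).prod (gmeas 0)).map (fun q : ℝ × ℝ => q.1 + q.2) = gmeas (n+1) := by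
  have hmeasadd : Measurable (fun q : ℝ × ℝ => q.1 + q.2) := by fun_prop
  haveI : IsProbabilityMeasure (((gmeas n).prod (gmeas 0)).map (fun q : ℝ × ℝ => q.1 + q.2)) :=
    Measure.isProbabilityMeasure_map hmeasadd.aemeasurable
  refine Measure.ext_of_Iic _ _ fun t => ?_
  rw [Measure.map_apply hmeasadd measurableSet_Iic]
  have hset : (fun q : ℝ × ℝ => q.1 + q.2) ⁻¹' Set.Iic t = {q : ℝ × ℝ | q.1 + q.2 ≤ t} := rfl
  rw [hset, Measure.prod_apply (hset ▸ hmeasadd measurableSet_Iic)]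
  have hslice : ∀ x : ℝ, (Prod.mk x ⁻¹' {q : ℝ × ℝ | q.1 + q.2 ≤ t}) = Set.Iic (t - x) := by
    intro x; ext y; simp [Set.mem_Iic]; constructor <;> intro h <;> linarith
  simp_rw [hslice, gmeas0_Iic]
  rw [gmeas, lintegral_withDensity_eq_lintegral_mul _ (measurable_gpdf n)
    (by fun_prop : Measurable fun x => ENNReal.ofReal (1 - Real.exp (-(t - x))))]
  rcases lt_or_ge t 0 with ht | ht
  · rw [gmeas_Iic_neg _ ht]
    rw [show (fun x => (gpdf n * fun x => ENNReal.ofReal (1 - Real.exp (-(t - x)))) x)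
        = fun _ : ℝ => (0:ℝ≥0∞) from ?_, lintegral_zero]
    funext x
    simp only [Pi.mul_apply]
    rcases lt_or_ge x 0 with hx | hx
    · rw [gpdf, if_neg (not_le.2 hx)]
      simp
    · have : 1 - Real.exp (-(t - x)) ≤ 0 := by
        have : 1 ≤ Real.exp (-(t-x)) := Real.one_le_exp (by linarith)
        linarith
      rw [ENNReal.ofReal_eq_zero.2 this, mul_zero]
  · have hind : (fun x => (gpdf n * fun x => ENNReal.ofReal (1 - Real.exp (-(t - x)))) x)
        = (Set.Icc 0 t).indicator (fun x => ENNReal.ofReal (p n x * (1 - Real.exp (x - t)))) := by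
      funext x
      simp only [Pi.mul_apply]
      rcases lt_or_ge x 0 with hx | hx
      · rw [Set.indicator_of_notMem (by simp [Set.mem_Icc]; intro h; linarith)]
        rw [gpdf, if_neg (not_le.2 hx)]
        simp
      · rcases le_or_gt x t with hxt | hxt
        · rw [Set.indicator_of_mem (Set.mem_Icc.2 ⟨hx, hxt⟩), gpdf, if_pos hx,
            ← ENNReal.ofReal_mul (p_nonneg hx)]
          congr 2
          ring_nf
        · rw [Set.indicator_of_notMem (by simp [Set.mem_Icc]; intro h; linarith)]
          have : 1 - Real.exp (-(t - x)) ≤ 0 := by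
            have : 1 ≤ Real.exp (-(t-x)) := Real.one_le_exp (by linarith)
            linarith
          rw [ENNReal.ofReal_eq_zero.2 this, mul_zero]
    rw [hind, lintegral_indicator measurableSet_Icc _]
    have hcont : Continuous (fun x => p n x * (1 - Real.exp (x - t))) := by
      have := continuous_p n; fun_prop
    rw [← MeasureTheory.ofReal_integral_eq_lintegral_ofReal hcont.integrableOn_Icc
      ((ae_restrict_iff' measurableSet_Icc).2 (ae_of_all _ fun x hx => by
        have h1 : Real.exp (x - t) ≤ 1 := Real.exp_le_one_iff.2 (by linarith [hx.2])
        have := p_nonneg (n := n) hx.1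
        show (0:ℝ) ≤ p n x * (1 - Real.exp (x - t))
        nlinarith))]
    have hint : ∫ x in Set.Icc 0 t, p n x * (1 - Real.exp (x - t))
        = 1 - Real.exp (-t) * T (n+1) t := by
      rw [MeasureTheory.integral_Icc_eq_integral_Ioc, ← intervalIntegral.integral_of_le ht,
        intervalIntegral.integral_eq_sub_of_hasDerivAt (fun x _ => hasDerivAt_G2 n t x)
        (hcont.intervalIntegrable 0 t)]
      rw [sum_range_T]
      simp [T_zero]
      ring
    rw [hint, gmeas_Iic ht]

lemma gmeas_Iic_zero (n : ℕ) : gmeas n (Set.Iic 0) = 0 := by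
  rw [gmeas_Iic le_rfl, T_zero]
  simp

lemma map_sum {Ω : Type*} [MeasurableSpace Ω] (μ : Measure Ω) [IsProbabilityMeasure μ]
    {ι : Type*} (U : ι → Ω → ℝ) (hUmeas : ∀ i, Measurable (U i))
    (hIndep : iIndepFun U μ)
    (hExp : ∀ i, μ.map (U i) = gmeas 0) :
    ∀ s : Finset ι, s.Nonempty → μ.map (fun ω => ∑ i ∈ s, U i ω) = gmeas (s.card - 1) := by
  classical
  intro s hs
  induction hs using Finset.Nonempty.cons_induction with
  | singleton a => simpa using hExp a
  | cons a s ha hs ih =>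
    skip
    have hX : Measurable (fun ω => ∑ i ∈ s, U i ω) := by
      exact Finset.measurable_sum s fun i _ => hUmeas i
    have hind : IndepFun (fun ω => ∑ i ∈ s, U i ω) (U a) μ := by
      have := hIndep.indepFun_finset_sum_of_notMem hUmeas ha
      have heq : (∑ j ∈ s, U j) = fun ω => ∑ i ∈ s, U i ω := by
        funext ω; simp [Finset.sum_apply]
      rwa [heq] at this
    have hprod := (indepFun_iff_map_prod_eq_prod_map_map hX.aemeasurable
      (hUmeas a).aemeasurable).1 hind
    have hcomp : (fun ω => ∑ i ∈ Finset.cons a s ha, U i ω)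
        = (fun q : ℝ × ℝ => q.1 + q.2) ∘ (fun ω => ((fun ω => ∑ i ∈ s, U i ω) ω, U a ω)) := by
      funext ω
      simp [Finset.sum_cons, Finset.sum_insert ha, add_comm]
    rw [hcomp, ← Measure.map_map (by fun_prop) (hX.prodMk (hUmeas a)), hprod, ih, hExp a,
      conv_step]
    congr 1
    rw [Finset.card_cons]
    have := Finset.card_pos.2 hs
    omega

lemma T_growth (n : ℕ) {M : ℝ} (hM : 0 ≤ M) : T n M ≤ 2 ^ n * Real.exp (M / 2) := by
  have h1 : T n M ≤ ∑ l ∈ Finset.range (n+1), 2 ^ n * ((M/2) ^ l / l.factorial) := by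
    refine Finset.sum_le_sum fun l hl => ?_
    have hl' : l ≤ n := Nat.lt_succ_iff.1 (Finset.mem_range.1 hl)
    have hMl : M ^ l = 2 ^ l * (M/2) ^ l := by
      rw [← mul_pow]; ring_nf
    rw [hMl, mul_div_assoc]
    refine mul_le_mul_of_nonneg_right (pow_le_pow_right₀ one_le_two hl') (by positivity)
  calc T n M ≤ _ := h1
  _ = 2 ^ n * T n (M/2) := by rw [← Finset.mul_sum]; rfl
  _ ≤ 2 ^ n * Real.exp (M/2) := by
      refine mul_le_mul_of_nonneg_left (T_le_exp (by positivity)) (by positivity)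

lemma g_lower (n : ℕ) {M : ℝ} (hM : 0 ≤ M) :
    M / 2 - n * Real.log 2 ≤ M - Real.log (T n M) := by
  have h1 : Real.log (T n M) ≤ Real.log (2 ^ n * Real.exp (M / 2)) :=
    Real.log_le_log (T_pos hM) (T_growth n hM)
  have h2 : Real.log (2 ^ n * Real.exp (M / 2)) = n * Real.log 2 + M / 2 := by
    rw [Real.log_mul (by positivity) (Real.exp_ne_zero _), Real.log_pow, Real.log_exp]
  linarith

end Recal

open Recal

/-- Paper's Lemma 3.8: the joint score is an IT anomaly score.
Let `U 0, …, U (m-1)` (`m ≥ 1`) be independent `Exp(1)` random variables and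
`S_sum = U 0 + ⋯ + U (m-1)`. Then the recalibrated joint score
`S = S_sum - log (Σ_{l=0}^{m-1} S_sum^l / l!)` is `Exp(1)`-distributed, i.e.
`P(S ≥ s) = e^{-s}` for all `s ≥ 0`. -/
theorem recalibrated_joint_score_is_exponential
    {Ω : Type*} [MeasurableSpace Ω] (μ : Measure Ω) [IsProbabilityMeasure μ]
    (m : ℕ) (hm : 1 ≤ m)
    (U : Fin m → Ω → ℝ) (hUmeas : ∀ i, Measurable (U i))
    (hIndep : iIndepFun U μ)
    (hExp : ∀ i, μ.map (U i) = expMeasure 1)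
    (Ssum : Ω → ℝ) (hSsum : ∀ ω, Ssum ω = ∑ i : Fin m, U i ω)
    (S : Ω → ℝ)
    (hS : ∀ ω, S ω = Ssum ω - Real.log (∑ l ∈ range m, Ssum ω ^ l / l.factorial)) :
    ∀ s : ℝ, 0 ≤ s → μ {ω | S ω ≥ s} = ENNReal.ofReal (Real.exp (-s)) := by
  intro s hs
  set n : ℕ := m - 1 with hn
  have hmn : n + 1 = m := by omega
  -- the recalibration function
  set g : ℝ → ℝ := fun x => x - Real.log (T n x) with hg
  have hSg : ∀ ω, S ω = g (Ssum ω) := by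
    intro ω
    rw [hS ω, hg]
    simp only [T, hmn]
  -- measurability
  have hTcont : Continuous (T n) := by
    unfold T
    exact continuous_finset_sum _ fun l _ => by fun_prop
  have hSm : Measurable Ssum := by
    have : Ssum = fun ω => ∑ i : Fin m, U i ω := funext hSsum
    rw [this]
    exact Finset.measurable_sum _ fun i _ => hUmeas i
  have hgmeas : Measurable g :=
    measurable_id.sub (Real.measurable_log.comp hTcont.measurable)
  -- the distribution of Ssum is gmeas n
  have hExp' : ∀ i, μ.map (U i) = gmeas 0 := by
    intro i
    rw [hExp i]
    show gammaMeasure 1 1 = gmeas 0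
    rw [gmeas, gpdf_eq_gammaPDF]
    norm_num
    rfl
  have hmap : μ.map Ssum = gmeas n := by
    have hne : (Finset.univ : Finset (Fin m)).Nonempty := ⟨⟨0, hm⟩, Finset.mem_univ _⟩
    have := map_sum μ U hUmeas hIndep hExp' Finset.univ hne
    rw [Finset.card_univ, Fintype.card_fin] at this
    have heq : (fun ω => ∑ i ∈ Finset.univ, U i ω) = Ssum := by
      funext ω; rw [hSsum ω]
    rwa [heq] at this
  -- monotonicity of g on [0, ∞)
  have hDeriv : ∀ x : ℝ, 0 ≤ x →
      HasDerivAt g (1 - (∑ l ∈ Finset.range n, x ^ l / l.factorial) / T n x) x := by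
    intro x hx
    exact (hasDerivAt_id x).sub ((hasDerivAt_T n x).log (T_pos hx).ne')
  have hgc : ContinuousOn g (Set.Ici 0) := by
    intro x hx
    exact ((continuousAt_id.sub ((Real.continuousAt_log (T_pos hx).ne').comp
      hTcont.continuousAt))).continuousWithinAt
  have hmono : StrictMonoOn g (Set.Ici 0) := by
    refine strictMonoOn_of_deriv_pos (convex_Ici 0) hgc fun x hx => ?_
    rw [interior_Ici] at hx
    rw [(hDeriv x (le_of_lt hx)).deriv]
    have hT := T_pos (n := n) (le_of_lt hx)
    have hdiff : T n x - (∑ l ∈ Finset.range n, x ^ l / l.factorial) = x ^ n / n.factorial := by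
      rw [T, Finset.sum_range_succ]; ring
    have hx' : 0 < x := hx
    have hpos : 0 < x ^ n / (n.factorial : ℝ) := by positivity
    rw [sub_pos, div_lt_one hT]
    linarith
  -- find the threshold x* via IVT
  set M : ℝ := 2 * (s + (n + 1) * Real.log 2) with hM
  have hlog2 : 0 < Real.log 2 := Real.log_pos one_lt_two
  have hM0 : 0 ≤ M := by
    have hn0 : (0:ℝ) ≤ (n:ℝ) := Nat.cast_nonneg n
    nlinarith
  have hgM : s ≤ g M := by
    have := g_lower n hM0
    have h2 : M / 2 - n * Real.log 2 = s + Real.log 2 := by rw [hM]; ring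
    rw [h2] at this
    simp only [hg]
    linarith
  have hg0 : g 0 = 0 := by simp [hg, T_zero]
  have hmem : s ∈ Set.Icc (g 0) (g M) := ⟨by rw [hg0]; exact hs, hgM⟩
  obtain ⟨c, hcmem, hgc'⟩ := intermediate_value_Icc hM0 (hgc.mono Set.Icc_subset_Ici_self) hmem
  have hc0 : (0:ℝ) ≤ c := hcmem.1
  -- rewrite the event
  have hset : {ω | S ω ≥ s} = Ssum ⁻¹' {x | s ≤ g x} := by
    ext ω
    simp only [Set.mem_setOf_eq, Set.mem_preimage, ge_iff_le, hSg ω]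
  rw [hset, ← Measure.map_apply hSm (measurableSet_le measurable_const hgmeas), hmap]
  -- the event agrees with [c, ∞) up to a gmeas-null set
  have hae : {x : ℝ | s ≤ g x} =ᵐ[gmeas n] Set.Ici c := by
    rw [MeasureTheory.ae_eq_set]
    constructor
    · refine measure_mono_null (fun x hx => ?_) (gmeas_Iic_zero n)
      simp only [Set.mem_diff, Set.mem_setOf_eq, Set.mem_Ici, not_le] at hx
      by_contra hcon
      simp only [Set.mem_Iic, not_le] at hcon
      have := hmono (Set.mem_Ici.2 (le_of_lt hcon)) (Set.mem_Ici.2 hc0) hx.2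
      rw [hgc'] at this
      linarith [hx.1]
    · refine measure_mono_null (fun x hx => ?_) (gmeas_Iic_zero n)
      simp only [Set.mem_diff, Set.mem_setOf_eq, Set.mem_Ici, not_le] at hx
      by_contra hcon
      simp only [Set.mem_Iic, not_le] at hcon
      have := hmono.monotoneOn (Set.mem_Ici.2 hc0) (Set.mem_Ici.2 (le_of_lt hcon)) hx.1
      rw [hgc'] at this
      linarith [hx.2]
  rw [measure_congr hae, gmeas_Ici hc0]
  congr 1
  have hTc := T_pos (n := n) hc0
  rw [← Real.exp_log hTc, ← Real.exp_add]
  congr 1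
  have : c - Real.log (T n c) = s := hgc'
  linarith
end

section
/- Let U_1, …, U_m (m ≥ 1) be independent nonnegative real random variables each satisfying P(U_i ≥ s) ≤ e^{-s} for all s ≥ 0. Then for every t ≥ 0, P(U_1 + ⋯ + U_m ≥ t) ≤ e^{-t} · Σ_{l=0}^{m-1} t^l / l!. (This is the probabilistic core of the paper's Theorem 3.10: subject to score typicality in a polytree, with Ŝ_sum := Σ_{i≠j} |S(x_i) - S(pa_i)|_+ a lower bound for the sum of the independent conditional anomaly scores, the hypothesis H_0^j that all mechanisms except the j-th worked as expected can be rejected with p-value p ≤ e^{-Ŝ_sum} · Σ_{l=0}^{n-2} Ŝ_sum^l/l!.) -/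
open MeasureTheory ProbabilityTheory Real Finset

lemma h_intble (t a b : ℝ) :
    IntervalIntegrable ((Set.Iio t).indicator (fun s => Real.exp (s - t))) volume a b := by
  have hc : Continuous (fun s : ℝ => Real.exp (s - t)) := by continuity
  have := hc.intervalIntegrable (μ := volume) a b
  rw [intervalIntegrable_iff] at this ⊢
  exact this.indicator measurableSet_Iio

lemma h_int_eq (t : ℝ) (ht : 0 ≤ t) (x : ℝ) (hx : 0 ≤ x) :
    ∫ s in (0)..x, (Set.Iio t).indicator (fun s => Real.exp (s - t)) s
      = Real.exp (min x t - t) - Real.exp (-t) := by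
  have key : ∀ b : ℝ, 0 ≤ b → b ≤ t → ∫ s in (0)..b, (Set.Iio t).indicator (fun s => Real.exp (s - t)) s
      = Real.exp (b - t) - Real.exp (-t) := by
    intro b hb0 hb
    have hcong : ∀ᵐ s : ℝ, s ∈ Set.uIoc 0 b →
        (Set.Iio t).indicator (fun s => Real.exp (s - t)) s = Real.exp (s - t) := by
      filter_upwards [ae_iff.mpr (by simp : volume {s : ℝ | ¬ s ≠ t} = 0)] with s hs hsb
      rw [Set.uIoc_of_le hb0] at hsb
      have : s < t := lt_of_le_of_ne (hsb.2.trans hb) hs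
      simp [Set.indicator_of_mem, this]
    rw [intervalIntegral.integral_congr_ae hcong]
    rw [intervalIntegral.integral_comp_sub_right (fun s => Real.exp s) t, integral_exp]
    ring_nf
  rcases le_or_gt x t with hxt | hxt
  · rw [min_eq_left hxt]; exact key x hx hxt
  · rw [min_eq_right hxt.le]
    rw [← intervalIntegral.integral_add_adjacent_intervals (h_intble t 0 t) (h_intble t t x)]
    rw [key t ht le_rfl]
    have h2 : ∫ s in t..x, (Set.Iio t).indicator (fun s => Real.exp (s - t)) s = 0 := by
      have : ∀ s ∈ Set.uIoc t x, (Set.Iio t).indicator (fun s => Real.exp (s - t)) s = 0 := by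
        intro s hs
        rw [Set.uIoc_of_le hxt.le] at hs
        exact Set.indicator_of_notMem (by simpa using hs.1.le) _
      rw [intervalIntegral.integral_congr_ae (Filter.Eventually.of_forall this)]
      simp
    rw [h2]; ring

lemma step {Ω : Type*} [MeasurableSpace Ω] (μ : Measure Ω) [IsProbabilityMeasure μ]
    (n : ℕ) (X Y : Ω → ℝ) (hX : Measurable X) (hY : Measurable Y)
    (hind : IndepFun X Y μ) (hX0 : ∀ ω, 0 ≤ X ω)
    (hXtail : ∀ s : ℝ, 0 ≤ s → μ {ω | X ω ≥ s}
      ≤ ENNReal.ofReal (Real.exp (-s) * ∑ l ∈ range n, s ^ l / l.factorial))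
    (hYtail : ∀ s : ℝ, 0 ≤ s → μ {ω | Y ω ≥ s} ≤ ENNReal.ofReal (Real.exp (-s)))
    (t : ℝ) (ht : 0 ≤ t) :
    μ {ω | X ω + Y ω ≥ t}
      ≤ ENNReal.ofReal (Real.exp (-t) * ∑ l ∈ range (n + 1), t ^ l / l.factorial) := by
  classical
  set h : ℝ → ℝ := (Set.Iio t).indicator (fun s => Real.exp (s - t)) with hh
  set p : ℝ → ℝ := fun s => ∑ l ∈ range n, s ^ l / l.factorial with hp
  have hp_nn : ∀ s : ℝ, 0 ≤ s → 0 ≤ p s := fun s hs =>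
    Finset.sum_nonneg fun l _ => div_nonneg (pow_nonneg hs l) (Nat.cast_nonneg _)
  have hp_cont : Continuous p := continuous_finset_sum _ fun l _ =>
    (continuous_pow l).div_const _
  -- Step A
  have stepA : μ {ω | X ω + Y ω ≥ t}
      ≤ ∫⁻ ω, min 1 (ENNReal.ofReal (Real.exp (X ω - t))) ∂μ := by
    have hmap : μ.map (fun ω => (X ω, Y ω)) = (μ.map X).prod (μ.map Y) :=
      (indepFun_iff_map_prod_eq_prod_map_map hX.aemeasurable hY.aemeasurable).mp hind
    have hSmble : MeasurableSet {q : ℝ × ℝ | t ≤ q.1 + q.2} :=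
      measurableSet_le measurable_const (measurable_fst.add measurable_snd)
    have h1 : μ {ω | X ω + Y ω ≥ t}
        = (μ.map (fun ω => (X ω, Y ω))) {q : ℝ × ℝ | t ≤ q.1 + q.2} := by
      rw [Measure.map_apply (hX.prodMk hY) hSmble]
      rfl
    rw [h1, hmap, Measure.prod_apply hSmble]
    have hbound : ∀ x : ℝ, (μ.map Y) (Prod.mk x ⁻¹' {q : ℝ × ℝ | t ≤ q.1 + q.2})
        ≤ min 1 (ENNReal.ofReal (Real.exp (x - t))) := by
      intro x
      have hpre : Prod.mk x ⁻¹' {q : ℝ × ℝ | t ≤ q.1 + q.2} = Set.Ici (t - x) := by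
        ext y; simp [Set.mem_Ici]; constructor <;> intro hy <;> linarith
      rw [hpre, Measure.map_apply hY measurableSet_Ici]
      refine le_min prob_le_one ?_
      rcases le_or_gt x t with hxt | hxt
      · have := hYtail (t - x) (by linarith)
        have hset : Y ⁻¹' Set.Ici (t - x) = {ω | Y ω ≥ t - x} := rfl
        rw [hset]
        calc μ {ω | Y ω ≥ t - x} ≤ ENNReal.ofReal (Real.exp (-(t - x))) := this
          _ = ENNReal.ofReal (Real.exp (x - t)) := by ring_nf
      · refine le_trans prob_le_one ?_
        rw [← ENNReal.ofReal_one]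
        exact ENNReal.ofReal_le_ofReal (Real.one_le_exp (by linarith))
    refine le_trans (lintegral_mono hbound) (le_of_eq ?_)
    exact lintegral_map (by measurability) hX
  -- Step B : pointwise identity
  have stepB : ∀ ω, min 1 (ENNReal.ofReal (Real.exp (X ω - t)))
      = ENNReal.ofReal (Real.exp (-t)) + ENNReal.ofReal (∫ s in (0)..X ω, h s) := by
    intro ω
    have hint := h_int_eq t ht (X ω) (hX0 ω)
    rw [hint]
    have hmin : min 1 (ENNReal.ofReal (Real.exp (X ω - t)))
        = ENNReal.ofReal (Real.exp (min (X ω) t - t)) := by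
      rcases le_or_gt (X ω) t with hxt | hxt
      · rw [min_eq_left hxt, min_eq_right]
        rw [← ENNReal.ofReal_one]
        exact ENNReal.ofReal_le_ofReal (Real.exp_le_one_iff.mpr (by linarith))
      · rw [min_eq_right hxt.le, min_eq_left, sub_self, Real.exp_zero, ENNReal.ofReal_one]
        rw [← ENNReal.ofReal_one]
        exact ENNReal.ofReal_le_ofReal (Real.one_le_exp (by linarith))
    rw [hmin, ← ENNReal.ofReal_add (Real.exp_nonneg _) (by
      have : Real.exp (-t) ≤ Real.exp (min (X ω) t - t) :=
        Real.exp_le_exp.mpr (by simp [le_min_iff]; constructor <;> [linarith [hX0 ω]; linarith])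
      linarith)]
    congr 1; ring
  -- Step C : layer cake
  have layercake : ∫⁻ ω, ENNReal.ofReal (∫ s in (0)..X ω, h s) ∂μ
      = ∫⁻ r in Set.Ioi 0, μ {a | r ≤ X a} * ENNReal.ofReal (h r) :=
    lintegral_comp_eq_lintegral_meas_le_mul μ (Filter.Eventually.of_forall hX0)
      hX.aemeasurable (fun t' _ => h_intble t 0 t')
      (Filter.Eventually.of_forall (fun r => Set.indicator_nonneg
        (fun s _ => (Real.exp_nonneg _)) r))
  -- Step D : bound the tail integral
  have hbound2 : ∫⁻ r in Set.Ioi 0, μ {a | r ≤ X a} * ENNReal.ofReal (h r)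
      ≤ ∫⁻ r in Set.Ioi 0,
          (Set.Ioo 0 t).indicator (fun r => ENNReal.ofReal (Real.exp (-t) * p r)) r := by
    refine lintegral_mono_ae ?_
    refine (ae_restrict_iff' measurableSet_Ioi).mpr (Filter.Eventually.of_forall ?_)
    intro r hr
    have hr0 : (0:ℝ) < r := hr
    rcases lt_or_ge r t with hrt | hrt
    · rw [Set.indicator_of_mem (Set.mem_Ioo.mpr ⟨hr0, hrt⟩)]
      have h1 : h r = Real.exp (r - t) := Set.indicator_of_mem (Set.mem_Iio.mpr hrt) _
      rw [h1]
      have h2 : μ {a | r ≤ X a} ≤ ENNReal.ofReal (Real.exp (-r) * p r) := hXtail r hr0.le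
      calc μ {a | r ≤ X a} * ENNReal.ofReal (Real.exp (r - t))
          ≤ ENNReal.ofReal (Real.exp (-r) * p r) * ENNReal.ofReal (Real.exp (r - t)) :=
            mul_le_mul_left h2 _
        _ = ENNReal.ofReal (Real.exp (-t) * p r) := by
            rw [← ENNReal.ofReal_mul (mul_nonneg (Real.exp_nonneg _) (hp_nn r hr0.le))]
            congr 1
            rw [mul_comm (Real.exp (-r)) (p r), mul_assoc, ← Real.exp_add]
            ring_nf
    · have h0 : h r = 0 := Set.indicator_of_notMem (by simp [hrt]) _
      rw [h0, ENNReal.ofReal_zero, mul_zero]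
      exact zero_le
  -- Step E : evaluate indicator integral
  have hind2 : ∫⁻ r in Set.Ioi 0,
        (Set.Ioo 0 t).indicator (fun r => ENNReal.ofReal (Real.exp (-t) * p r)) r
      = ∫⁻ r in Set.Ioo 0 t, ENNReal.ofReal (Real.exp (-t) * p r) := by
    rw [lintegral_indicator measurableSet_Ioo, Measure.restrict_restrict measurableSet_Ioo]
    rw [Set.inter_eq_self_of_subset_left Set.Ioo_subset_Ioi_self]
  -- Step F : compute the integral
  have hcalc : ∫⁻ r in Set.Ioo 0 t, ENNReal.ofReal (Real.exp (-t) * p r)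
      = ENNReal.ofReal (Real.exp (-t) * ∑ l ∈ range n, t ^ (l+1) / (l+1).factorial) := by
    have hInt : IntegrableOn (fun r => Real.exp (-t) * p r) (Set.Ioo 0 t) volume :=
      ((continuous_const.mul hp_cont).integrableOn_Icc (a := 0) (b := t)).mono_set
        Set.Ioo_subset_Icc_self
    have hnn : 0 ≤ᵐ[volume.restrict (Set.Ioo 0 t)] fun r => Real.exp (-t) * p r :=
      (ae_restrict_iff' measurableSet_Ioo).mpr (Filter.Eventually.of_forall
        fun r hr => mul_nonneg (Real.exp_nonneg _) (hp_nn r hr.1.le))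
    rw [← MeasureTheory.ofReal_integral_eq_lintegral_ofReal hInt hnn]
    congr 1
    rw [← MeasureTheory.integral_Ioc_eq_integral_Ioo, ← intervalIntegral.integral_of_le ht]
    rw [intervalIntegral.integral_const_mul]
    congr 1
    rw [hp]
    rw [intervalIntegral.integral_finset_sum (fun l _ =>
      (((continuous_pow l).div_const (l.factorial : ℝ)).intervalIntegrable (μ := volume) 0 t))]
    refine Finset.sum_congr rfl fun l _ => ?_
    rw [intervalIntegral.integral_div, integral_pow]
    rw [Nat.factorial_succ]
    push_cast
    field_simp
    simp
  -- Step G : the sum identity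
  have hsumid : ENNReal.ofReal (Real.exp (-t))
      + ENNReal.ofReal (Real.exp (-t) * ∑ l ∈ range n, t ^ (l+1) / (l+1).factorial)
      = ENNReal.ofReal (Real.exp (-t) * ∑ l ∈ range (n+1), t ^ l / l.factorial) := by
    rw [← ENNReal.ofReal_add (Real.exp_nonneg _) (mul_nonneg (Real.exp_nonneg _)
      (Finset.sum_nonneg fun l _ => div_nonneg (pow_nonneg ht _) (Nat.cast_nonneg _)))]
    congr 1
    rw [Finset.sum_range_succ']
    norm_num [Nat.factorial]
    ring
  -- Final assembly
  calc μ {ω | X ω + Y ω ≥ t}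
      ≤ ∫⁻ ω, min 1 (ENNReal.ofReal (Real.exp (X ω - t))) ∂μ := stepA
    _ = ∫⁻ ω, (ENNReal.ofReal (Real.exp (-t))
          + ENNReal.ofReal (∫ s in (0)..X ω, h s)) ∂μ := lintegral_congr stepB
    _ = ENNReal.ofReal (Real.exp (-t))
          + ∫⁻ ω, ENNReal.ofReal (∫ s in (0)..X ω, h s) ∂μ := by
        rw [lintegral_add_left measurable_const]
        simp [lintegral_const, measure_univ]
    _ = ENNReal.ofReal (Real.exp (-t))
          + ∫⁻ r in Set.Ioi 0, μ {a | r ≤ X a} * ENNReal.ofReal (h r) := by rw [layercake]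
    _ ≤ ENNReal.ofReal (Real.exp (-t))
          + ENNReal.ofReal (Real.exp (-t) * ∑ l ∈ range n, t ^ (l+1) / (l+1).factorial) :=
        add_le_add_right ((hbound2.trans_eq hind2).trans_eq hcalc) _
    _ = ENNReal.ofReal (Real.exp (-t) * ∑ l ∈ range (n+1), t ^ l / l.factorial) := hsumid


/-- probabilistic core of the paper's Theorem 3.10. Let
`U 0, …, U (m-1)` (`m ≥ 1`) be independent nonnegative real random variables each
satisfying `P(U i ≥ s) ≤ e^{-s}` for all `s ≥ 0`. Then for every `t ≥ 0`,
`P(U 0 + ⋯ + U (m-1) ≥ t) ≤ e^{-t} · Σ_{l=0}^{m-1} t^l / l!`. -/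
theorem erlang_tail_bound_of_sum_subexponential_scores
    {Ω : Type*} [MeasurableSpace Ω] (μ : Measure Ω) [IsProbabilityMeasure μ]
    (m : ℕ) (hm : 1 ≤ m)
    (U : Fin m → Ω → ℝ) (hUmeas : ∀ i, Measurable (U i))
    (hIndep : iIndepFun U μ)
    (hU0 : ∀ i ω, 0 ≤ U i ω)
    (hTail : ∀ i, ∀ s : ℝ, 0 ≤ s → μ {ω | U i ω ≥ s} ≤ ENNReal.ofReal (Real.exp (-s))) :
    ∀ t : ℝ, 0 ≤ t →
      μ {ω | (∑ i : Fin m, U i ω) ≥ t}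
        ≤ ENNReal.ofReal (Real.exp (-t) * ∑ l ∈ range m, t ^ l / l.factorial) := by
  classical
  have key : ∀ s : Finset (Fin m), s.Nonempty → ∀ t : ℝ, 0 ≤ t →
      μ {ω | (∑ i ∈ s, U i ω) ≥ t}
        ≤ ENNReal.ofReal (Real.exp (-t) * ∑ l ∈ range s.card, t ^ l / l.factorial) := by
    intro s
    induction s using Finset.induction_on with
    | empty => intro hne; exact absurd hne (by simp)
    | @insert i s hi ih =>
      intro _ t ht
      rcases s.eq_empty_or_nonempty with rfl | hse
      · simp only [insert_empty_eq, Finset.sum_singleton, Finset.card_singleton]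
        calc μ {ω | U i ω ≥ t} ≤ ENNReal.ofReal (Real.exp (-t)) := hTail i t ht
          _ = ENNReal.ofReal (Real.exp (-t) * ∑ l ∈ range 1, t ^ l / l.factorial) := by
              norm_num
      · have hXmeas : Measurable (fun ω => ∑ j ∈ s, U j ω) :=
          Finset.measurable_sum s fun j _ => hUmeas j
        have hindXY : IndepFun (fun ω => ∑ j ∈ s, U j ω) (U i) μ := by
          have := hIndep.indepFun_finsetSum_of_notMem hUmeas hi
          have hfun : (∑ j ∈ s, U j) = fun ω => ∑ j ∈ s, U j ω := by
            funext ω; simp [Finset.sum_apply]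
          rwa [hfun] at this
        have hset : {ω | (∑ j ∈ insert i s, U j ω) ≥ t}
            = {ω | (fun ω => ∑ j ∈ s, U j ω) ω + U i ω ≥ t} := by
          ext ω
          simp only [Set.mem_setOf_eq, Finset.sum_insert hi]
          constructor <;> intro hw <;> linarith
        rw [hset, Finset.card_insert_of_notMem hi]
        exact step μ s.card (fun ω => ∑ j ∈ s, U j ω) (U i) hXmeas (hUmeas i) hindXY
          (fun ω => Finset.sum_nonneg fun j _ => hU0 j ω)
          (fun r hr => ih hse r hr) (hTail i) t ht
  intro t ht
  have : Nonempty (Fin m) := ⟨⟨0, hm⟩⟩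
  have huniv : (Finset.univ : Finset (Fin m)).Nonempty := Finset.univ_nonempty
  have := key Finset.univ huniv t ht
  simpa using this
end

section
/- Let p_1, …, p_n ∈ (0,1], set S_i := -log p_i and S_max := max_i S_i, and fix δ ∈ (0,1] and α ∈ (0,1). For each i, let B_i^1, …, B_i^k be i.i.d. Bernoulli(p_i) random variables (the indicators 1{τ(x_i^j) ≥ τ(x_i)} over k samples from the normal period), let p̂_i := (1/k) Σ_{j=1}^k B_i^j and Ŝ_i := -log p̂_i. If k ≥ 12 e^{S_max} δ^{-2} log(2n/α), then with probability at least 1 - α, simultaneously for all i ∈ {1,…,n} we have p̂_i > 0 and |Ŝ_i - S_i| < δ. (This is the paper's Lemma B.1 on the sample complexity of IT anomaly score estimation, with the constant in the sample size adjusted from 3 to 12 so that the multiplicative Chernoff bound argument is valid, using 1 - e^{-δ} ≥ δ/2 for δ ∈ (0,1].) -/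
open MeasureTheory ProbabilityTheory Real Finset

/-! Each `p̂ i = T / k`, where `T` is a sum of `k` independent Bernoulli(`p i`) indicators, so
`E[exp (t T)] ≤ exp (k p (eᵗ - 1))`. Markov's inequality for `exp (t T)` at the threshold `k p eᵗ`
bounds either tail (`t = δ` and `t = -δ`) by `exp (-k p (1 - (1 - t) eᵗ))`, and
`1 - (1 - t) eᵗ ≥ t² / 6` for `|t| ≤ 1`. As `p i ≥ e^{-Smax}`, the sample size makes the
probability that `p̂ i ∉ (p i e^{-δ}, p i e^δ)` at most `α / n`; outside these `n` events every
`|log p̂ i - log p i| < δ`, and a union bound concludes. -/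

lemma sq_div_six_le_one_sub_one_sub_mul_exp {x : ℝ} (hx : |x| ≤ 1) :
    x ^ 2 / 6 ≤ 1 - (1 - x) * exp x := by
  have hTaylor := (abs_le.1 (Real.exp_bound hx (n := 5) (by norm_num))).2
  norm_num [Finset.sum_range_succ, Nat.factorial] at hTaylor
  have hx5 : |x| ^ 5 ≤ x ^ 2 := by
    rw [← sq_abs x, show |x| ^ 5 = |x| ^ 2 * |x| ^ 3 by ring]
    exact mul_le_of_le_one_right (by positivity) (pow_le_one₀ (abs_nonneg x) hx)
  obtain ⟨hx₁, hx₂⟩ := abs_le.1 hx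
  have hexp : (1 - x) * exp x ≤
      (1 - x) * (1 + x + x ^ 2 / 2 + x ^ 3 / 6 + x ^ 4 / 24 + x ^ 2 / 100) :=
    mul_le_mul_of_nonneg_left (by linarith) (by linarith)
  nlinarith [mul_nonneg (mul_nonneg (sq_nonneg x) (sq_nonneg x)) (by linarith : 0 ≤ 1 + x),
    mul_nonneg (sq_nonneg x) (by linarith : 0 ≤ 1 + x), sq_nonneg x, pow_two_nonneg (x ^ 2)]

section ZeroOneValued

variable {Ω ι : Type*} [MeasurableSpace Ω] {μ : Measure Ω} [IsProbabilityMeasure μ] {q : ℝ}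

lemma mgf_of_zero_one_valued {X : Ω → ℝ} (hX : Measurable X) (h01 : ∀ ω, X ω = 0 ∨ X ω = 1)
    (hq : 0 ≤ q) (hlaw : μ {ω | X ω = 1} = ENNReal.ofReal q) (t : ℝ) :
    mgf X μ t = 1 + q * (exp t - 1) := by
  have hexp : (fun ω ↦ exp (t * X ω)) =
      fun ω ↦ 1 + {ω | X ω = 1}.indicator (fun _ ↦ exp t - 1) ω := by
    funext ω
    rcases h01 ω with h | h <;> simp [h]
  have hs : MeasurableSet {ω | X ω = 1} := hX (measurableSet_singleton 1)
  rw [mgf, hexp, integral_add (integrable_const 1) ((integrable_const _).indicator hs),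
    integral_indicator_const _ hs, measureReal_def, hlaw, ENNReal.toReal_ofReal hq]
  simp

variable [Fintype ι] {X : ι → Ω → ℝ}

lemma mgf_sum_le_of_iIndepFun_zero_one_valued (hX : ∀ j, Measurable (X j))
    (h01 : ∀ j ω, X j ω = 0 ∨ X j ω = 1) (hq : 0 ≤ q)
    (hlaw : ∀ j, μ {ω | X j ω = 1} = ENNReal.ofReal q) (hindep : iIndepFun X μ) (t : ℝ) :
    mgf (∑ j, X j) μ t ≤ exp (Fintype.card ι * q * (exp t - 1)) := by
  calc mgf (∑ j, X j) μ t = ∏ j, mgf (X j) μ t := hindep.mgf_sum hX _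
    _ ≤ ∏ _j : ι, exp (q * (exp t - 1)) := by
      refine Finset.prod_le_prod (fun j _ ↦ mgf_nonneg) fun j _ ↦ ?_
      rw [mgf_of_zero_one_valued (hX j) (h01 j) hq (hlaw j)]
      linarith [add_one_le_exp (q * (exp t - 1))]
    _ = exp (Fintype.card ι * q * (exp t - 1)) := by
      rw [Finset.prod_const, Finset.card_univ, ← exp_nat_mul, mul_assoc]

lemma integrable_exp_mul_sum_of_zero_one_valued (hX : ∀ j, Measurable (X j))
    (h01 : ∀ j ω, X j ω = 0 ∨ X j ω = 1) (hindep : iIndepFun X μ) (t : ℝ) :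
    Integrable (fun ω ↦ exp (t * (∑ j, X j) ω)) μ :=
  hindep.integrable_exp_mul_sum hX fun j _ ↦ integrable_exp_mul_of_mem_Icc (a := 0) (b := 1)
    (hX j).aemeasurable (ae_of_all _ fun ω ↦ by rcases h01 j ω with h | h <;> simp [h])

lemma exp_neg_mul_mul_mgf_sum_le (hX : ∀ j, Measurable (X j))
    (h01 : ∀ j ω, X j ω = 0 ∨ X j ω = 1) (hq : 0 ≤ q)
    (hlaw : ∀ j, μ {ω | X j ω = 1} = ENNReal.ofReal q) (hindep : iIndepFun X μ) {t : ℝ}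
    (ht : |t| ≤ 1) :
    exp (-t * (Fintype.card ι * q * exp t)) * mgf (∑ j, X j) μ t ≤
      exp (-(Fintype.card ι * q * t ^ 2 / 6)) := by
  have hcq : 0 ≤ Fintype.card ι * q := by positivity
  calc exp (-t * (Fintype.card ι * q * exp t)) * mgf (∑ j, X j) μ t
      ≤ exp (-t * (Fintype.card ι * q * exp t)) * exp (Fintype.card ι * q * (exp t - 1)) :=
        mul_le_mul_of_nonneg_left
          (mgf_sum_le_of_iIndepFun_zero_one_valued hX h01 hq hlaw hindep t) (exp_pos _).le
    _ = exp (-(Fintype.card ι * q * (1 - (1 - t) * exp t))) := by rw [← exp_add]; ring_nf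
    _ ≤ exp (-(Fintype.card ι * q * t ^ 2 / 6)) := by
      refine exp_le_exp.2 ?_
      nlinarith [mul_le_mul_of_nonneg_left (sq_div_six_le_one_sub_one_sub_mul_exp ht) hcq]

lemma measure_sum_notMem_Ioo_le (hX : ∀ j, Measurable (X j))
    (h01 : ∀ j ω, X j ω = 0 ∨ X j ω = 1) (hq : 0 ≤ q)
    (hlaw : ∀ j, μ {ω | X j ω = 1} = ENNReal.ofReal q) (hindep : iIndepFun X μ) {δ : ℝ}
    (hδ0 : 0 < δ) (hδ1 : δ ≤ 1) :
    μ {ω | ∑ j, X j ω ∉ Set.Ioo (Fintype.card ι * q * exp (-δ)) (Fintype.card ι * q * exp δ)}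
      ≤ ENNReal.ofReal (2 * exp (-(Fintype.card ι * q * δ ^ 2 / 6))) := by
  have hlower := (measure_le_le_exp_mul_mgf (Fintype.card ι * q * exp (-δ)) (neg_nonpos.2 hδ0.le)
    (integrable_exp_mul_sum_of_zero_one_valued hX h01 hindep _)).trans
    (exp_neg_mul_mul_mgf_sum_le hX h01 hq hlaw hindep (t := -δ) (by simpa [abs_of_pos hδ0]))
  have hupper := (measure_ge_le_exp_mul_mgf (Fintype.card ι * q * exp δ) hδ0.le
    (integrable_exp_mul_sum_of_zero_one_valued hX h01 hindep _)).trans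
    (exp_neg_mul_mul_mgf_sum_le hX h01 hq hlaw hindep (by simpa [abs_of_pos hδ0]))
  simp only [Finset.sum_apply, neg_sq] at hlower hupper
  have hunion : {ω | ∑ j, X j ω ∉ Set.Ioo (Fintype.card ι * q * exp (-δ))
      (Fintype.card ι * q * exp δ)} = {ω | ∑ j, X j ω ≤ Fintype.card ι * q * exp (-δ)} ∪
      {ω | Fintype.card ι * q * exp δ ≤ ∑ j, X j ω} := by
    ext ω
    simp only [Set.mem_Ioo, not_and_or, not_lt, Set.mem_ofPred_eq, Set.mem_union]
  rw [hunion, two_mul, ENNReal.ofReal_add (exp_pos _).le (exp_pos _).le]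
  refine (measure_union_le _ _).trans (add_le_add ?_ ?_) <;>
    rwa [← ofReal_measureReal, ENNReal.ofReal_le_ofReal_iff (exp_pos _).le]

end ZeroOneValued

lemma ofReal_one_sub_card_mul_le_measure {Ω ι : Type*} [MeasurableSpace Ω] {μ : Measure Ω}
    [IsProbabilityMeasure μ] [Fintype ι] {s : Set Ω} {t : ι → Set Ω} {ε : ℝ} (hε : 0 ≤ ε)
    (hst : (⋃ i, t i)ᶜ ⊆ s) (ht : ∀ i, μ (t i) ≤ ENNReal.ofReal ε) :
    ENNReal.ofReal (1 - Fintype.card ι * ε) ≤ μ s := by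
  have hunion : μ (⋃ i, t i) ≤ ENNReal.ofReal (Fintype.card ι * ε) :=
    calc μ (⋃ i, t i) ≤ ∑ i, μ (t i) := measure_iUnion_fintype_le μ t
      _ ≤ ∑ _i : ι, ENNReal.ofReal ε := Finset.sum_le_sum fun i _ ↦ ht i
      _ = ENNReal.ofReal (Fintype.card ι * ε) := by
        rw [Finset.sum_const, Finset.card_univ, nsmul_eq_mul, ENNReal.ofReal_mul (by positivity),
          ENNReal.ofReal_natCast]
  calc ENNReal.ofReal (1 - Fintype.card ι * ε) = 1 - ENNReal.ofReal (Fintype.card ι * ε) := by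
        rw [ENNReal.ofReal_sub _ (by positivity), ENNReal.ofReal_one]
    _ ≤ 1 - μ (⋃ i, t i) := tsub_le_tsub_left hunion 1
    _ ≤ μ (⋃ i, t i)ᶜ := by
        rw [tsub_le_iff_right, add_comm, ← measure_univ (μ := μ)]
        exact measure_univ_le_add_compl _
    _ ≤ μ s := measure_mono hst

lemma two_mul_exp_neg_le_of_sample_size {k q s δ α m : ℝ} (hm : 0 < m) (hα : 0 < α)
    (hαm : α ≤ 2 * m) (hδ : 0 < δ) (hq : exp (-s) ≤ q)
    (hk : 12 * exp s / δ ^ 2 * log (2 * m / α) ≤ k) :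
    2 * exp (-(k * q * δ ^ 2 / 6)) ≤ α / m := by
  set L := log (2 * m / α)
  have hL : 0 ≤ L := log_nonneg (by rwa [le_div_iff₀ hα, one_mul])
  have hkδ : 12 * exp s * L ≤ k * δ ^ 2 := by
    rwa [div_mul_eq_mul_div, div_le_iff₀ (by positivity)] at hk
  have hLk : L ≤ k * q * δ ^ 2 / 6 :=
    calc L ≤ 12 * exp s * L * exp (-s) / 6 := by
          rw [exp_neg]; field_simp; linarith
      _ ≤ k * δ ^ 2 * q / 6 := by gcongr; exact hkδ.trans' (by positivity)
      _ = k * q * δ ^ 2 / 6 := by ring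
  calc 2 * exp (-(k * q * δ ^ 2 / 6)) ≤ 2 * exp (-L) := by gcongr
    _ = α / m := by rw [exp_neg, exp_log (by positivity), inv_div]; field_simp

lemma abs_log_div_sub_log_lt_of_mem_Ioo {c q x δ : ℝ} (hc : 0 ≤ c) (hq : 0 < q)
    (hx : x ∈ Set.Ioo (c * q * exp (-δ)) (c * q * exp δ)) :
    0 < x / c ∧ |log (x / c) - log q| < δ := by
  have hc0 : 0 < c := hc.lt_of_ne <| by rintro rfl; simp at hx
  have hlower : q * exp (-δ) < x / c := by rw [lt_div_iff₀ hc0]; linarith [hx.1]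
  have hupper : x / c < q * exp δ := by rw [div_lt_iff₀ hc0]; linarith [hx.2]
  have hx0 : 0 < x / c := (mul_pos hq (exp_pos _)).trans hlower
  replace hlower := log_lt_log (mul_pos hq (exp_pos _)) hlower
  replace hupper := log_lt_log hx0 hupper
  rw [log_mul hq.ne' (exp_ne_zero _), log_exp] at hlower hupper
  exact ⟨hx0, abs_sub_lt_iff.2 ⟨by linarith, by linarith⟩⟩

theorem it_score_estimation_sample_complexity_general
    {Ω : Type*} [MeasurableSpace Ω] (μ : Measure Ω) [IsProbabilityMeasure μ]
    (n k : ℕ) (hn : 0 < n)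
    (p : Fin n → ℝ) (hp0 : ∀ i, 0 < p i)
    (S : Fin n → ℝ) (hS : ∀ i, S i = -Real.log (p i))
    (Smax : ℝ)
    (hSmax : Smax = Finset.univ.sup' (Finset.univ_nonempty_iff.mpr
      (Fin.pos_iff_nonempty.mp hn)) S)
    (δ : ℝ) (hδ0 : 0 < δ) (hδ1 : δ ≤ 1)
    (α : ℝ) (hα0 : 0 < α) (hα1 : α < 1)
    (B : Fin n → Fin k → Ω → ℝ) (hBmeas : ∀ i j, Measurable (B i j))
    (hB01 : ∀ i j ω, B i j ω = 0 ∨ B i j ω = 1)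
    (hBlaw : ∀ i j, μ {ω | B i j ω = 1} = ENNReal.ofReal (p i))
    (hBindep : ∀ i, iIndepFun (B i) μ)
    (phat : Fin n → Ω → ℝ)
    (hphat : ∀ i ω, phat i ω = (1 / (k : ℝ)) * ∑ j : Fin k, B i j ω)
    (Shat : Fin n → Ω → ℝ)
    (hShat : ∀ i ω, Shat i ω = -Real.log (phat i ω))
    (hk : (k : ℝ) ≥ 12 * Real.exp Smax / δ ^ 2 * Real.log (2 * n / α)) :
    μ {ω | ∀ i, 0 < phat i ω ∧ |Shat i ω - S i| < δ}
      ≥ ENNReal.ofReal (1 - α) := by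
  have hn1 : (1 : ℝ) ≤ n := by exact_mod_cast hn
  have hn0 : (0 : ℝ) < n := by linarith
  have hp_ge : ∀ i, exp (-Smax) ≤ p i := fun i ↦ by
    have hSi : -log (p i) ≤ Smax := hS i ▸ hSmax ▸ Finset.le_sup' S (Finset.mem_univ i)
    simpa [exp_log (hp0 i)] using exp_le_exp.2 (neg_le.1 hSi)
  have hbad : ∀ i, μ {ω | ∑ j, B i j ω ∉ Set.Ioo (k * p i * exp (-δ)) (k * p i * exp δ)}
      ≤ ENNReal.ofReal (α / n) := fun i ↦ by
    have hchernoff := measure_sum_notMem_Ioo_le (hBmeas i) (hB01 i) (hp0 i).le (hBlaw i)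
      (hBindep i) hδ0 hδ1
    rw [Fintype.card_fin] at hchernoff
    exact hchernoff.trans <| ENNReal.ofReal_le_ofReal <|
      two_mul_exp_neg_le_of_sample_size hn0 hα0 (by linarith) hδ0 (hp_ge i) hk
  have hgood : (⋃ i, {ω | ∑ j, B i j ω ∉ Set.Ioo (k * p i * exp (-δ)) (k * p i * exp δ)})ᶜ
      ⊆ {ω | ∀ i, 0 < phat i ω ∧ |Shat i ω - S i| < δ} := fun ω hω i ↦ by
    rw [hShat, hS, neg_sub_neg, abs_sub_comm, hphat, one_div, inv_mul_eq_div]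
    exact abs_log_div_sub_log_lt_of_mem_Ioo k.cast_nonneg (hp0 i)
      (not_not.1 (Set.mem_iInter.1 (Set.compl_iUnion _ ▸ hω) i))
  simpa [mul_div_cancel₀ α hn0.ne'] using
    ofReal_one_sub_card_mul_le_measure (div_nonneg hα0.le hn0.le) hgood hbad

/-- Paper's Lemma B.1, sample complexity of IT anomaly score estimation,
with constant 12. Let `p 0, …, p (n-1) ∈ (0,1]`, `S i = -log (p i)`,
`Smax = max_i S i`, `δ ∈ (0,1]`, `α ∈ (0,1)`. For each `i` let `B i 0, …, B i (k-1)` be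
i.i.d. `Bernoulli (p i)` indicators, `p̂ i = (1/k) Σ_j B i j` and `Ŝ i = -log (p̂ i)`. If
`k ≥ 12 e^{Smax} δ⁻² log (2n/α)`, then with probability at least `1 - α`, simultaneously
for all `i`, `p̂ i > 0` and `|Ŝ i - S i| < δ`. -/
theorem it_score_estimation_sample_complexity
    {Ω : Type*} [MeasurableSpace Ω] (μ : Measure Ω) [IsProbabilityMeasure μ]
    (n k : ℕ) (hn : 0 < n)
    (p : Fin n → ℝ) (hp0 : ∀ i, 0 < p i) (hp1 : ∀ i, p i ≤ 1)
    (S : Fin n → ℝ) (hS : ∀ i, S i = -Real.log (p i))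
    (Smax : ℝ)
    (hSmax : Smax = Finset.univ.sup' (Finset.univ_nonempty_iff.mpr
      (Fin.pos_iff_nonempty.mp hn)) S)
    (δ : ℝ) (hδ0 : 0 < δ) (hδ1 : δ ≤ 1)
    (α : ℝ) (hα0 : 0 < α) (hα1 : α < 1)
    (B : Fin n → Fin k → Ω → ℝ) (hBmeas : ∀ i j, Measurable (B i j))
    (hB01 : ∀ i j ω, B i j ω = 0 ∨ B i j ω = 1)
    (hBlaw : ∀ i j, μ {ω | B i j ω = 1} = ENNReal.ofReal (p i))
    (hBindep : ∀ i, iIndepFun (B i) μ)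
    (phat : Fin n → Ω → ℝ)
    (hphat : ∀ i ω, phat i ω = (1 / (k : ℝ)) * ∑ j : Fin k, B i j ω)
    (Shat : Fin n → Ω → ℝ)
    (hShat : ∀ i ω, Shat i ω = -Real.log (phat i ω))
    (hk : (k : ℝ) ≥ 12 * Real.exp Smax / δ ^ 2 * Real.log (2 * n / α)) :
    μ {ω | ∀ i, 0 < phat i ω ∧ |Shat i ω - S i| < δ}
      ≥ ENNReal.ofReal (1 - α) :=
  it_score_estimation_sample_complexity_general μ n k hn p hp0 S hS Smax hSmax δ hδ0 hδ1 α hα0 hα1 B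
    hBmeas hB01 hBlaw hBindep phat hphat Shat hShat hk
end

section
/- Let L be an n×n real lower-triangular matrix (entries L_{j,i} = 0 whenever i > j) such that every row of L has Euclidean norm 1, and suppose ρ := min_{1 ≤ j ≤ n} L_{j,j}² > 0. Then for every column index j, the number of indices i < j with L_{i,i}² < L_{j,i}² is at most (1-ρ)/ρ. (Paper's Appendix E claim: in a linear SCM with standardized variables and Cholesky factor L of the covariance matrix, the score of a downstream effect exceeds the score of its root cause for only at most (1-ρ)/ρ of the possible root causes; when ρ ≫ 1/n this is a small fraction of all n nodes, so effects with larger z²-score than their root cause are rare.) -/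
open Finset

/-- Paper's Appendix E claim. Let `L` be an `n × n` real
lower-triangular matrix (`L j i = 0` whenever `j < i`) whose rows all have Euclidean norm
`1`, and let `ρ = min_j (L j j)² > 0`. Then for every column index `j`, the number of
indices `i < j` with `(L i i)² < (L j i)²` is at most `(1 - ρ)/ρ`. -/
theorem score_increase_along_pathways_is_rare
    (n : ℕ) (hn : 0 < n) (L : Matrix (Fin n) (Fin n) ℝ)
    (hLower : ∀ j i : Fin n, j < i → L j i = 0)
    (hRows : ∀ j : Fin n, ∑ i : Fin n, (L j i) ^ 2 = 1)
    (ρ : ℝ)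
    (hρ : ρ = Finset.univ.inf' (Finset.univ_nonempty_iff.mpr
      (Fin.pos_iff_nonempty.mp hn)) (fun j : Fin n => (L j j) ^ 2))
    (hρpos : 0 < ρ) :
    ∀ j : Fin n,
      (((Finset.univ.filter (fun i : Fin n => i < j ∧ (L i i) ^ 2 < (L j i) ^ 2)).card : ℝ))
        ≤ (1 - ρ) / ρ := by
  intro j
  set S := Finset.univ.filter (fun i : Fin n => i < j ∧ (L i i) ^ 2 < (L j i) ^ 2) with hS
  have hρle : ∀ i : Fin n, ρ ≤ (L i i) ^ 2 := fun i => by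
    rw [hρ]; exact Finset.inf'_le _ (Finset.mem_univ i)
  have h1 : (S.card : ℝ) * ρ ≤ ∑ i ∈ S, (L j i) ^ 2 := by
    have := Finset.card_nsmul_le_sum S (fun i => (L j i) ^ 2) ρ
      (fun i hi => by
        rw [hS, Finset.mem_filter] at hi
        exact le_of_lt (lt_of_le_of_lt (hρle i) hi.2.2))
    simpa [nsmul_eq_mul] using this
  have hsub : S ⊆ Finset.univ.erase j := by
    intro i hi
    rw [hS, Finset.mem_filter] at hi
    exact Finset.mem_erase.mpr ⟨ne_of_lt hi.2.1, Finset.mem_univ i⟩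
  have h2 : ∑ i ∈ S, (L j i) ^ 2 ≤ ∑ i ∈ Finset.univ.erase j, (L j i) ^ 2 :=
    Finset.sum_le_sum_of_subset_of_nonneg hsub (fun i _ _ => sq_nonneg _)
  have h3 : ∑ i ∈ Finset.univ.erase j, (L j i) ^ 2 = 1 - (L j j) ^ 2 := by
    have h := Finset.add_sum_erase Finset.univ (fun i => (L j i) ^ 2) (Finset.mem_univ j)
    simp only [hRows j] at h
    linarith
  have h4 : (S.card : ℝ) * ρ ≤ 1 - ρ := by
    have := hρle j
    linarith
  rw [le_div_iff₀ hρpos]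
  exact h4
end

section
/- Let U_1, …, U_k (k ≥ 1) be independent nonnegative real random variables each satisfying P(U_i ≥ s) ≤ e^{-s} for all s ≥ 0, let T := U_1 + ⋯ + U_k, and define W := T - log(Σ_{l=0}^{k-1} T^l / l!). Then P(W ≥ w) ≤ e^{-w} for all w ≥ 0; that is, W is dominated by a valid IT anomaly score. (This is the paper's claim in Section 3.3 that, since the parents of a node in a polytree are marginally independent, the joint score S_joint(pa_i) := Σ_j S(pa_i^j) - log Σ_{l=0}^{k-1} (Σ_j S(pa_i^j))^l / l! over the k parents is again an IT score for the joint event pa_i.) -/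
/-!
Write `F̄ₘ(t) = e^{-t} ∑_{l<m} t^l / l!` for the survival function of the Erlang(m, 1) law.
If `X ≥ 0` has tail at most `F̄ₘ` and `V` is independent of `X` with tail at most `e^{-s}`, then
conditioning on `X` gives `P(X + V ≥ t) ≤ E[min 1 (e^{X - t})]`, and the layer-cake formula
turns the right side into `e^{-t} + ∫₀ᵗ e^{s - t} P(X ≥ s) ds`, which is at most
`e^{-t} + ∫₀ᵗ e^{s - t} F̄ₘ(s) ds = F̄ₘ₊₁(t)`.
By induction `T = U₁ + ⋯ + U_k` has tail at most `F̄_k`, and `W = -log F̄_k(T)`.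
For a continuous `F̄` dominating the tail of `T ≥ 0`, the event `F̄(T) ≤ α` forces `T ≥ t₀`, where
`t₀` is the least `t ≥ 0` with `F̄(t) ≤ α`, so it has probability at most `F̄(t₀) ≤ α`.
-/

open MeasureTheory ProbabilityTheory Real Finset

noncomputable def erlangSurvival (m : ℕ) (t : ℝ) : ℝ :=
  exp (-t) * ∑ l ∈ range m, t ^ l / l.factorial

lemma erlangSurvival_nonneg (m : ℕ) {t : ℝ} (ht : 0 ≤ t) : 0 ≤ erlangSurvival m t :=
  mul_nonneg (exp_pos _).le
    (sum_nonneg fun l _ ↦ div_nonneg (pow_nonneg ht l) l.factorial.cast_nonneg)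

lemma erlangSurvival_one (t : ℝ) : erlangSurvival 1 t = exp (-t) := by
  simp [erlangSurvival]

@[fun_prop]
lemma continuous_erlangSurvival (m : ℕ) : Continuous (erlangSurvival m) := by
  unfold erlangSurvival; fun_prop

lemma one_le_sum_pow_div_factorial {m : ℕ} (hm : 1 ≤ m) {t : ℝ} (ht : 0 ≤ t) :
    1 ≤ ∑ l ∈ range m, t ^ l / l.factorial := by
  calc (1 : ℝ) = t ^ 0 / (0 : ℕ).factorial := by simp
    _ ≤ _ := single_le_sum (fun l _ ↦ div_nonneg (pow_nonneg ht l) l.factorial.cast_nonneg)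
      (mem_range.mpr hm)

lemma erlangSurvival_eq_exp_neg_sub_log {m : ℕ} (hm : 1 ≤ m) {t : ℝ} (ht : 0 ≤ t) :
    erlangSurvival m t = exp (-(t - log (∑ l ∈ range m, t ^ l / l.factorial))) := by
  have hpos := (one_le_sum_pow_div_factorial hm ht).trans_lt' one_pos
  rw [neg_sub, exp_sub, exp_log hpos, erlangSurvival, exp_neg]
  field_simp

lemma integral_sum_pow_div_factorial (m : ℕ) (t : ℝ) :
    ∫ s in (0 : ℝ)..t, ∑ l ∈ range m, s ^ l / l.factorial
      = ∑ l ∈ range (m + 1), t ^ l / l.factorial - 1 := by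
  rw [intervalIntegral.integral_finsetSum
    fun l _ ↦ (intervalIntegral.intervalIntegrable_pow l).div_const _, sum_range_succ']
  simp only [intervalIntegral.integral_div, integral_pow, Nat.factorial_succ]
  push_cast
  simp only [pow_zero, Nat.factorial_zero, Nat.cast_one, div_one, add_sub_cancel_right]
  refine sum_congr rfl fun l _ ↦ ?_
  field_simp
  ring

lemma erlangSurvival_succ (m : ℕ) (t : ℝ) :
    erlangSurvival (m + 1) t = exp (-t) + ∫ s in (0 : ℝ)..t, exp (s - t) * erlangSurvival m s := by
  have h (s : ℝ) :
      exp (s - t) * erlangSurvival m s = exp (-t) * ∑ l ∈ range m, s ^ l / l.factorial := by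
    rw [erlangSurvival, ← mul_assoc, ← exp_add]
    ring_nf
  rw [intervalIntegral.integral_congr fun s _ ↦ h s, intervalIntegral.integral_const_mul,
    integral_sum_pow_div_factorial, erlangSurvival]
  ring

lemma min_one_exp_sub_eq_add_integral {x t : ℝ} :
    min 1 (exp (x - t)) = exp (-t) + ∫ s in (0 : ℝ)..min x t, exp (s - t) := by
  rw [intervalIntegral.integral_comp_sub_right, integral_exp, zero_sub, add_sub_cancel,
    ← min_sub_sub_right, exp_monotone.map_min, sub_self, exp_zero, min_comm]

section Tail

variable {Ω : Type*} [MeasurableSpace Ω] {μ : Measure Ω} [IsProbabilityMeasure μ]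

lemma measure_le_le_ofReal_min_one_exp_neg {V : Ω → ℝ}
    (hV : ∀ s, 0 ≤ s → μ {ω | s ≤ V ω} ≤ ENNReal.ofReal (exp (-s))) (s : ℝ) :
    μ {ω | s ≤ V ω} ≤ ENNReal.ofReal (min 1 (exp (-s))) := by
  rcases le_total 0 s with hs | hs
  · rw [min_eq_right (exp_le_one_iff.mpr (neg_nonpos.mpr hs))]
    exact hV s hs
  · rw [min_eq_left (one_le_exp_iff.mpr (neg_nonneg.mpr hs)), ENNReal.ofReal_one]
    exact prob_le_one

lemma ProbabilityTheory.IndepFun.measure_le_add_le_lintegral {X V : Ω → ℝ}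
    (hX : Measurable X) (hV : Measurable V) (hXV : IndepFun X V μ)
    (hVtail : ∀ s, 0 ≤ s → μ {ω | s ≤ V ω} ≤ ENNReal.ofReal (exp (-s))) (t : ℝ) :
    μ {ω | t ≤ X ω + V ω} ≤ ∫⁻ ω, ENNReal.ofReal (min 1 (exp (X ω - t))) ∂μ := by
  have hmap := (indepFun_iff_map_prod_eq_prod_map_map hX.aemeasurable hV.aemeasurable).mp hXV
  have hset : MeasurableSet {p : ℝ × ℝ | t ≤ p.1 + p.2} :=
    measurableSet_le measurable_const (by fun_prop)
  calc μ {ω | t ≤ X ω + V ω} = (μ.map X).prod (μ.map V) {p | t ≤ p.1 + p.2} := by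
        rw [← hmap, Measure.map_apply (hX.prodMk hV) hset]; rfl
    _ = ∫⁻ x, μ.map V {y | t ≤ x + y} ∂μ.map X := Measure.prod_apply hset
    _ ≤ ∫⁻ x, ENNReal.ofReal (min 1 (exp (x - t))) ∂μ.map X := by
        refine lintegral_mono fun x ↦ ?_
        rw [Measure.map_apply hV (measurableSet_le measurable_const (by fun_prop)), ← neg_sub]
        convert measure_le_le_ofReal_min_one_exp_neg hVtail (t - x) using 3
        simp only [Set.preimage_ofPred_eq, sub_le_iff_le_add']
    _ = ∫⁻ ω, ENNReal.ofReal (min 1 (exp (X ω - t))) ∂μ := lintegral_map (by fun_prop) hX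

lemma lintegral_ofReal_min_one_exp_sub_eq {X : Ω → ℝ} (hX0 : ∀ ω, 0 ≤ X ω) (hX : Measurable X)
    {t : ℝ} (ht : 0 ≤ t) :
    ∫⁻ ω, ENNReal.ofReal (min 1 (exp (X ω - t))) ∂μ = ENNReal.ofReal (exp (-t)) +
      ∫⁻ s in Set.Ioi 0, μ {ω | s ≤ min (X ω) t} * ENNReal.ofReal (exp (s - t)) := by
  have hnn : ∀ ω, 0 ≤ ∫ s in (0 : ℝ)..min (X ω) t, exp (s - t) := fun ω ↦
    intervalIntegral.integral_nonneg (le_min (hX0 ω) ht) fun _ _ ↦ (exp_pos _).le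
  simp_rw [min_one_exp_sub_eq_add_integral, ENNReal.ofReal_add (exp_pos _).le (hnn _)]
  rw [lintegral_add_left measurable_const, lintegral_const, measure_univ, mul_one,
    lintegral_comp_eq_lintegral_meas_le_mul μ (ae_of_all _ fun ω ↦ le_min (hX0 ω) ht)
      (by fun_prop)
      (fun _ _ ↦ (by fun_prop : Continuous fun s ↦ exp (s - t)).intervalIntegrable _ _)
      (ae_of_all _ fun _ ↦ (exp_pos _).le)]

lemma lintegral_ofReal_min_one_exp_sub_le_erlangSurvival_succ {X : Ω → ℝ} (hX0 : ∀ ω, 0 ≤ X ω)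
    (hX : Measurable X) {m : ℕ}
    (hXtail : ∀ s, 0 ≤ s → μ {ω | s ≤ X ω} ≤ ENNReal.ofReal (erlangSurvival m s))
    {t : ℝ} (ht : 0 ≤ t) :
    ∫⁻ ω, ENNReal.ofReal (min 1 (exp (X ω - t))) ∂μ
      ≤ ENNReal.ofReal (erlangSurvival (m + 1) t) := by
  set g : ℝ → ℝ := fun s ↦ exp (s - t) * erlangSurvival m s
  have hg_nonneg : ∀ s, 0 ≤ s → 0 ≤ g s := fun s hs ↦
    mul_nonneg (exp_pos _).le (erlangSurvival_nonneg m hs)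
  have hbound : ∀ s ∈ Set.Ioi (0 : ℝ), μ {ω | s ≤ min (X ω) t} * ENNReal.ofReal (exp (s - t))
      ≤ (Set.Iic t).indicator (fun s ↦ ENNReal.ofReal (g s)) s := by
    intro s hs
    by_cases hst : s ≤ t
    · rw [Set.indicator_of_mem (Set.mem_Iic.mpr hst),
        ENNReal.ofReal_mul' (erlangSurvival_nonneg m hs.le), mul_comm]
      gcongr
      exact (measure_mono fun ω (hω : s ≤ min (X ω) t) ↦ hω.trans (min_le_left _ _)).trans
        (hXtail s hs.le)
    · have hempty : {ω | s ≤ min (X ω) t} = ∅ :=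
        Set.eq_empty_of_forall_notMem fun ω hω ↦ hst (hω.trans (min_le_right _ _))
      rw [hempty, measure_empty, zero_mul]
      exact bot_le
  calc ∫⁻ ω, ENNReal.ofReal (min 1 (exp (X ω - t))) ∂μ
      = ENNReal.ofReal (exp (-t)) +
          ∫⁻ s in Set.Ioi 0, μ {ω | s ≤ min (X ω) t} * ENNReal.ofReal (exp (s - t)) :=
        lintegral_ofReal_min_one_exp_sub_eq hX0 hX ht
    _ ≤ ENNReal.ofReal (exp (-t)) +
          ∫⁻ s in Set.Ioi 0, (Set.Iic t).indicator (fun s ↦ ENNReal.ofReal (g s)) s :=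
        add_le_add le_rfl (setLIntegral_mono' measurableSet_Ioi hbound)
    _ = ENNReal.ofReal (exp (-t)) + ENNReal.ofReal (∫ s in (0 : ℝ)..t, g s) := by
        rw [lintegral_indicator measurableSet_Iic, Measure.restrict_restrict measurableSet_Iic,
          Set.inter_comm, Set.Ioi_inter_Iic, intervalIntegral.integral_of_le ht,
          ofReal_integral_eq_lintegral_ofReal (by fun_prop : Continuous g).integrableOn_Ioc
            ((ae_restrict_iff' measurableSet_Ioc).mpr (ae_of_all _ fun s hs ↦ hg_nonneg s hs.1.le))]
    _ = ENNReal.ofReal (erlangSurvival (m + 1) t) := by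
        rw [← ENNReal.ofReal_add (exp_pos _).le
          (intervalIntegral.integral_nonneg ht fun s hs ↦ hg_nonneg s hs.1), erlangSurvival_succ]

lemma ProbabilityTheory.IndepFun.measure_le_add_le_erlangSurvival_succ {X V : Ω → ℝ}
    (hX0 : ∀ ω, 0 ≤ X ω) (hX : Measurable X) (hV : Measurable V) (hXV : IndepFun X V μ) {m : ℕ}
    (hXtail : ∀ s, 0 ≤ s → μ {ω | s ≤ X ω} ≤ ENNReal.ofReal (erlangSurvival m s))
    (hVtail : ∀ s, 0 ≤ s → μ {ω | s ≤ V ω} ≤ ENNReal.ofReal (exp (-s)))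
    {t : ℝ} (ht : 0 ≤ t) :
    μ {ω | t ≤ X ω + V ω} ≤ ENNReal.ofReal (erlangSurvival (m + 1) t) :=
  (hXV.measure_le_add_le_lintegral hX hV hVtail t).trans
    (lintegral_ofReal_min_one_exp_sub_le_erlangSurvival_succ hX0 hX hXtail ht)

lemma ProbabilityTheory.iIndepFun.measure_le_sum_le_erlangSurvival {ι : Type*}
    {U : ι → Ω → ℝ} (hU : ∀ i, Measurable (U i)) (hindep : iIndepFun U μ)
    (hU0 : ∀ i ω, 0 ≤ U i ω)
    (htail : ∀ i, ∀ s, 0 ≤ s → μ {ω | s ≤ U i ω} ≤ ENNReal.ofReal (exp (-s)))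
    {s : Finset ι} (hs : s.Nonempty) {t : ℝ} (ht : 0 ≤ t) :
    μ {ω | t ≤ ∑ i ∈ s, U i ω} ≤ ENNReal.ofReal (erlangSurvival #s t) := by
  induction hs using Finset.Nonempty.cons_induction generalizing t with
  | singleton i => simpa [erlangSurvival_one] using htail i t ht
  | cons i s hi _ ih =>
    have hXV : IndepFun (fun ω ↦ ∑ j ∈ s, U j ω) (U i) μ := by
      simpa only [Finset.sum_fn] using hindep.indepFun_finsetSum_of_notMem hU hi
    simpa only [sum_cons, card_cons, add_comm (U i _)] using
      hXV.measure_le_add_le_erlangSurvival_succ (fun ω ↦ sum_nonneg fun j _ ↦ hU0 j ω)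
        (by fun_prop) (hU i) (fun _ ↦ ih) (htail i) ht

end Tail

lemma measure_comp_le_le_of_tail_le {Ω : Type*} [MeasurableSpace Ω] {μ : Measure Ω}
    {T : Ω → ℝ} {F : ℝ → ℝ} (hF : Continuous F) (hT0 : ∀ ω, 0 ≤ T ω)
    (hT : ∀ t, 0 ≤ t → μ {ω | t ≤ T ω} ≤ ENNReal.ofReal (F t)) (α : ℝ) :
    μ {ω | F (T ω) ≤ α} ≤ ENNReal.ofReal α := by
  set C := Set.Ici 0 ∩ F ⁻¹' Set.Iic α
  rcases C.eq_empty_or_nonempty with hC | hC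
  · have hempty : {ω | F (T ω) ≤ α} = ∅ :=
      Set.eq_empty_of_forall_notMem fun ω hω ↦ Set.eq_empty_iff_forall_notMem.mp hC _ ⟨hT0 ω, hω⟩
    simp [hempty]
  have hCclosed : IsClosed C := isClosed_Ici.inter (isClosed_Iic.preimage hF)
  have hCbdd : BddBelow C := ⟨0, fun _ hx ↦ hx.1⟩
  obtain ⟨ht₀, hFt₀⟩ := hCclosed.csInf_mem hC hCbdd
  calc μ {ω | F (T ω) ≤ α} ≤ μ {ω | sInf C ≤ T ω} :=
        measure_mono fun ω hω ↦ csInf_le hCbdd ⟨hT0 ω, hω⟩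
    _ ≤ ENNReal.ofReal (F (sInf C)) := hT _ ht₀
    _ ≤ ENNReal.ofReal α := ENNReal.ofReal_le_ofReal hFt₀

/-- Paper's Section 3.3: the joint score over independent parents is an
IT score. Let `U 0, …, U (k-1)` (`k ≥ 1`) be independent nonnegative real random
variables each satisfying `P(U i ≥ s) ≤ e^{-s}` for all `s ≥ 0`, let
`T = U 0 + ⋯ + U (k-1)`, and define `W = T - log (Σ_{l=0}^{k-1} T^l / l!)`. Then
`P(W ≥ w) ≤ e^{-w}` for all `w ≥ 0`, i.e. `W` is dominated by a valid IT anomaly score. -/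
theorem joint_parent_score_is_it_score
    {Ω : Type*} [MeasurableSpace Ω] (μ : Measure Ω) [IsProbabilityMeasure μ]
    (k : ℕ) (hk : 1 ≤ k)
    (U : Fin k → Ω → ℝ) (hUmeas : ∀ i, Measurable (U i))
    (hIndep : iIndepFun U μ)
    (hU0 : ∀ i ω, 0 ≤ U i ω)
    (hTail : ∀ i, ∀ s : ℝ, 0 ≤ s → μ {ω | U i ω ≥ s} ≤ ENNReal.ofReal (Real.exp (-s)))
    (T : Ω → ℝ) (hT : ∀ ω, T ω = ∑ i : Fin k, U i ω)
    (W : Ω → ℝ)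
    (hW : ∀ ω, W ω = T ω - Real.log (∑ l ∈ range k, T ω ^ l / l.factorial)) :
    ∀ w : ℝ, 0 ≤ w → μ {ω | W ω ≥ w} ≤ ENNReal.ofReal (Real.exp (-w)) := by
  intro w _
  have hT0 : ∀ ω, 0 ≤ T ω := fun ω ↦ hT ω ▸ sum_nonneg fun i _ ↦ hU0 i ω
  have hTtail : ∀ t, 0 ≤ t → μ {ω | t ≤ T ω} ≤ ENNReal.ofReal (erlangSurvival k t) := fun t ht ↦ by
    simpa only [← hT, card_univ, Fintype.card_fin] using
      hIndep.measure_le_sum_le_erlangSurvival hUmeas hU0 hTail ⟨⟨0, hk⟩, mem_univ _⟩ ht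
  have hevent : {ω | W ω ≥ w} = {ω | erlangSurvival k (T ω) ≤ exp (-w)} := by
    ext ω
    simp only [Set.mem_ofPred_eq, erlangSurvival_eq_exp_neg_sub_log hk (hT0 ω), ← hW, exp_le_exp,
      neg_le_neg_iff, ge_iff_le]
  rw [hevent]
  exact measure_comp_le_le_of_tail_le (continuous_erlangSurvival k) hT0 hTtail _
end
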